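/- If a Boolean function f depends on all n of its input variables, then Γ^1(f) + Γ^0(f) ≥ n + 1. -/

import Mathlib

attribute [local instance] Classical.propDecidable

/-- `b'` extends the partial assignment `b`: it agrees on all non-`*` coordinates of `b`. -/
def Extends {n : ℕ} (b' b : Fin n → Option Bool) : Prop :=
  ∀ i v, b i = some v → b' i = some v

/-- A total assignment `x` extends the partial assignment `b`. -/
def TExtends {n : ℕ} (x : Fin n → Bool) (b : Fin n → Option Bool) : Prop :=
  ∀ i v, b i = some v → x i = v

/-- `b` is a certificate of `f`: `f` is constant on all total extensions of `b`. -/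
def IsCert {n : ℕ} (f : (Fin n → Bool) → Bool) (b : Fin n → Option Bool) : Prop :=
  ∀ x y, TExtends x b → TExtends y b → f x = f y

/-- `b` is a `k`-certificate of `f`: it forces `f` to the value `k`. -/
def IsKCert {n : ℕ} (f : (Fin n → Bool) → Bool) (k : Bool) (b : Fin n → Option Bool) : Prop :=
  ∀ x, TExtends x b → f x = k

/-- A certificate is minimal if no proper restriction of it is a certificate. -/
def MinCert {n : ℕ} (f : (Fin n → Bool) → Bool) (c : Fin n → Option Bool) : Prop :=
  IsCert f c ∧ ∀ c', Extends c c' → c' ≠ c → ¬ IsCert f c'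

/-- A `k`-certificate is minimal if no proper restriction of it is a `k`-certificate. -/
def MinKCert {n : ℕ} (f : (Fin n → Bool) → Bool) (k : Bool) (c : Fin n → Option Bool) : Prop :=
  IsKCert f k c ∧ ∀ c', Extends c c' → c' ≠ c → ¬ IsKCert f k c'

/-- Monotone utility function: filling in `*`'s never decreases the value. -/
def Mono {n : ℕ} (g : (Fin n → Option Bool) → ℕ) : Prop :=
  ∀ b b', Extends b' b → g b ≤ g b'

/-- Submodular utility function: marginal gains shrink under extension. -/
def Submod {n : ℕ} (g : (Fin n → Option Bool) → ℕ) : Prop :=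
  ∀ b b' (i : Fin n) (ℓ : Bool), Extends b' b → b i = none → b' i = none →
    g (Function.update b' i (some ℓ)) + g b ≤ g (Function.update b i (some ℓ)) + g b'

/-- `g` is a goal function for `f` with goal value `Q`. -/
def GoalFn {n : ℕ} (f : (Fin n → Bool) → Bool) (g : (Fin n → Option Bool) → ℕ)
    (Q : ℕ) : Prop :=
  Mono g ∧ Submod g ∧ ∀ b, g b = Q ↔ IsCert f b

/-- `g` is a `k`-goal function for `f` with goal value `Q`. -/
def KGoalFn {n : ℕ} (f : (Fin n → Bool) → Bool) (k : Bool)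
    (g : (Fin n → Option Bool) → ℕ) (Q : ℕ) : Prop :=
  Mono g ∧ Submod g ∧ (∀ b, IsKCert f k b → g b = Q) ∧ (∀ b, ¬ IsKCert f k b → g b < Q)

/-- The goal value `Γ(f)`: the minimum goal value of any goal function for `f`. -/
noncomputable def gamma {n : ℕ} (f : (Fin n → Bool) → Bool) : ℕ :=
  sInf {Q | ∃ g, GoalFn f g Q}

/-- The `k`-goal value `Γ^k(f)`. -/
noncomputable def gammaK {n : ℕ} (f : (Fin n → Bool) → Bool) (k : Bool) : ℕ :=
  sInf {Q | ∃ g, KGoalFn f k g Q}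

/-- The weight of a partial assignment: the number of non-`*` coordinates. -/
noncomputable def wt {n : ℕ} (b : Fin n → Option Bool) : ℕ :=
  (Finset.univ.filter (fun i => (b i).isSome)).card

/-- `f` depends on its `i`-th variable. -/
def DependsOnVar {n : ℕ} (f : (Fin n → Bool) → Bool) (i : Fin n) : Prop :=
  ∃ x, f (Function.update x i true) ≠ f (Function.update x i false)

/-!
Take goal functions `g₀`, `g₁` attaining `Γ⁰(f)` and `Γ¹(f)`. No partial assignment is both a
`0`- and a `1`-certificate, so `g₀ + g₁ < Γ⁰(f) + Γ¹(f)` everywhere. Starting from the empty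
assignment, fix the variables one at a time so that `f` keeps depending, inside the current
subcube, on every free variable (choosing the variable and value that keep the most relevant
variables makes this possible). Fixing such a variable `i` to `ℓ` raises `g₀ + g₁` by at least
one: at a point `x` of the subcube where flipping `i` changes `f`, say `f (x[i ↦ ℓ]) = k`, the
assignment `x` with only `i` left free is not a `k`-certificate while fixing `i ↦ ℓ` makes it
one, and submodularity carries this gain of `g_k` back to the current assignment. After `n` steps
`n ≤ Γ⁰(f) + Γ¹(f) - 1`.
-/

open Finset Function

variable {n : ℕ}

section PartialAssignments

variable {b c : Fin n → Option Bool} {x : Fin n → Bool} {i : Fin n}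

lemma TExtends.mono {c' : Fin n → Option Bool} (hx : TExtends x c') (h : Extends c' c) :
    TExtends x c :=
  fun p v hp => hx p v (h p v hp)

lemma TExtends.update (hx : TExtends x b) (hb : b i = none) (v : Bool) :
    TExtends (update x i v) b := fun p w hp => by
  rw [update_of_ne (by rintro rfl; simp [hb] at hp)]
  exact hx p w hp

lemma textends_update_iff (hb : b i = none) (ℓ : Bool) :
    TExtends x (update b i (some ℓ)) ↔ TExtends x b ∧ x i = ℓ := by
  constructor
  · intro h
    refine ⟨fun p v hp => h p v ?_, h i ℓ (update_self ..)⟩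
    rwa [update_of_ne (by rintro rfl; simp [hb] at hp)]
  · rintro ⟨h, rfl⟩ p v hp
    rcases eq_or_ne p i with rfl | hpi
    · simpa using hp
    · exact h p v (by rwa [update_of_ne hpi] at hp)

lemma extends_update (hb : b i = none) (ℓ : Bool) : Extends (update b i (some ℓ)) b := by
  intro p v hp
  rwa [update_of_ne (by rintro rfl; simp [hb] at hp)]

lemma exists_textends (b : Fin n → Option Bool) : ∃ x, TExtends x b :=
  ⟨fun p => (b p).getD false, fun p v hp => by simp [hp]⟩

lemma textends_some (y : Fin n → Bool) : TExtends y (fun p => some (y p)) :=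
  fun _ _ hp => Option.some_injective _ hp

lemma isKCert_some_iff {f : (Fin n → Bool) → Bool} {k : Bool} (y : Fin n → Bool) :
    IsKCert f k (fun p => some (y p)) ↔ f y = k := by
  have hext : ∀ z, TExtends z (fun p => some (y p)) ↔ z = y := fun z =>
    ⟨fun hz => funext fun p => hz p (y p) rfl, by rintro rfl; exact textends_some z⟩
  simp [IsKCert, hext]

end PartialAssignments

section GoalFunctions

variable {f : (Fin n → Bool) → Bool} {k : Bool} {g : (Fin n → Option Bool) → ℕ} {Q : ℕ}

lemma KGoalFn.le_goal (hg : KGoalFn f k g Q) (b : Fin n → Option Bool) : g b ≤ Q := by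
  by_cases hb : IsKCert f k b
  · exact (hg.2.2.1 b hb).le
  · exact (hg.2.2.2 b hb).le

lemma KGoalFn.succ_le_update (hg : KGoalFn f k g Q) {c : Fin n → Option Bool} {i : Fin n}
    (hc : c i = none) {x : Fin n → Bool} (hx : TExtends x c) (ℓ : Bool)
    (hk : f (update x i ℓ) = k) (hnk : f (update x i (!ℓ)) ≠ k) :
    g c + 1 ≤ g (update c i (some ℓ)) := by
  -- Submodularity transfers the gain of fixing `i` at `x` with only `i` left free.
  set b : Fin n → Option Bool := update (fun p => some (x p)) i none
  have hbi : b i = none := update_self ..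
  have hcb : Extends b c := fun p v hp => by
    simp only [b]
    rw [update_of_ne (by rintro rfl; simp [hc] at hp), hx p v hp]
  have hupdate : ∀ m : Bool, update b i (some m) = fun p => some (update x i m p) := by
    intro m
    ext1 p
    rcases eq_or_ne p i with rfl | hpi <;> simp [b, update_of_ne, *]
  have hcert : g (update b i (some ℓ)) = Q := by
    rw [hupdate]
    exact hg.2.2.1 _ ((isKCert_some_iff _).2 hk)
  have hnotcert : g b < Q := by
    have hxb := textends_some (update x i (!ℓ))
    rw [← hupdate, textends_update_iff hbi] at hxb
    exact hg.2.2.2 _ fun hb => hnk (hb _ hxb.1)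
  have := hg.2.1 c b i ℓ hcb hc hbi
  omega

lemma not_isKCert_true_and_false (b : Fin n → Option Bool) :
    ¬ (IsKCert f true b ∧ IsKCert f false b) := by
  rintro ⟨h1, h0⟩
  obtain ⟨x, hx⟩ := exists_textends b
  simpa [h1 x hx] using h0 x hx

end GoalFunctions

section Restrictions

variable (f : (Fin n → Bool) → Bool)

def DependsOnVarWithin (c : Fin n → Option Bool) (i : Fin n) : Prop :=
  ∃ x, TExtends x c ∧ f (update x i true) ≠ f (update x i false)

noncomputable def freeVars (c : Fin n → Option Bool) : Finset (Fin n) := univ.filter (c · = none)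

noncomputable def relevantVars (c : Fin n → Option Bool) : Finset (Fin n) :=
  (freeVars c).filter (DependsOnVarWithin f c)

variable {f} {c d : Fin n → Option Bool} {i j : Fin n}

@[simp] lemma mem_freeVars : i ∈ freeVars c ↔ c i = none := by simp [freeVars]

@[simp] lemma mem_relevantVars : i ∈ relevantVars f c ↔ c i = none ∧ DependsOnVarWithin f c i := by
  simp [relevantVars]

lemma freeVars_update (ℓ : Bool) : freeVars (update c i (some ℓ)) = (freeVars c).erase i := by
  ext j
  rcases eq_or_ne j i with rfl | hji <;> simp [update_of_ne, *]

lemma eq_update_of_not_dependsOnVarWithin (hj : ¬ DependsOnVarWithin f d j) {y : Fin n → Bool}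
    (hy : TExtends y d) (m : Bool) : f (update y j m) = f y := by
  have hconst : f (update y j true) = f (update y j false) := by
    by_contra h
    exact hj ⟨y, hy, h⟩
  conv_rhs => rw [← update_eq_self j y]
  cases m <;> cases y j <;> simp [hconst]

lemma DependsOnVarWithin.update_of_not_dependsOnVarWithin (hk : DependsOnVarWithin f d i)
    (hdi : d i = none) (hdc : Extends d c) (hj : ¬ DependsOnVarWithin f d j) (hij : i ≠ j)
    (hcj : c j = none) (m : Bool) : DependsOnVarWithin f (update c j (some m)) i := by
  obtain ⟨y, hy, hyi⟩ := hk
  refine ⟨update y j m, ?_, ?_⟩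
  · exact (textends_update_iff hcj m).2 ⟨(hy.mono hdc).update hcj m, update_self ..⟩
  · have key : ∀ b : Bool, f (update (update y j m) i b) = f (update y i b) := fun b => by
      rw [update_comm hij.symm]
      exact eq_update_of_not_dependsOnVarWithin hj (hy.update hdi b) m
    rwa [key, key]

lemma exists_update_forall_dependsOnVarWithin (hdep : ∀ i ∈ freeVars c, DependsOnVarWithin f c i)
    (hne : (freeVars c).Nonempty) :
    ∃ i ∈ freeVars c, ∃ ℓ : Bool, ∀ j ∈ freeVars (update c i (some ℓ)),
      DependsOnVarWithin f (update c i (some ℓ)) j := by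
  -- Maximise the number of relevant variables left after fixing one; if some free `j` became
  -- irrelevant, fixing `j` instead would keep all of these and also `i`.
  obtain ⟨⟨i, ℓ⟩, hiℓ, hmax⟩ := ((freeVars c) ×ˢ (univ : Finset Bool)).exists_max_image
    (fun p => #(relevantVars f (update c p.1 (some p.2)))) (hne.product univ_nonempty)
  have hi : c i = none := by simpa using hiℓ
  refine ⟨i, mem_freeVars.2 hi, ℓ, fun j hj => ?_⟩
  by_contra hnj
  rw [freeVars_update, mem_erase, mem_freeVars] at hj
  obtain ⟨hji, hj⟩ := hj
  obtain ⟨x, hx, hxi⟩ := hdep i (mem_freeVars.2 hi)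
  have hsub : insert i (relevantVars f (update c i (some ℓ)))
      ⊆ relevantVars f (update c j (some (x j))) := by
    intro k hk
    rw [mem_relevantVars, ← mem_freeVars, freeVars_update, mem_erase, mem_freeVars]
    rcases mem_insert.1 hk with rfl | hk
    · exact ⟨⟨hji.symm, hi⟩, x, (textends_update_iff hj _).2 ⟨hx, rfl⟩, hxi⟩
    · obtain ⟨hk, hdk⟩ := mem_relevantVars.1 hk
      have hkj : k ≠ j := by rintro rfl; exact hnj hdk
      have hki : k ≠ i := by rintro rfl; simp at hk
      refine ⟨⟨hkj, by rwa [update_of_ne hki] at hk⟩, ?_⟩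
      exact hdk.update_of_not_dependsOnVarWithin hk (extends_update hi ℓ) hnj hkj hj _
  have hcard := card_le_card hsub
  rw [card_insert_of_notMem (by simp)] at hcard
  exact hcard.not_gt (Nat.lt_succ_of_le (hmax (j, x j) (by simpa using hj)))

end Restrictions

section Potential

variable {f : (Fin n → Bool) → Bool} {g₀ g₁ : (Fin n → Option Bool) → ℕ} {Q₀ Q₁ : ℕ}

lemma KGoalFn.add_lt_add (h₀ : KGoalFn f false g₀ Q₀) (h₁ : KGoalFn f true g₁ Q₁)
    (c : Fin n → Option Bool) : g₀ c + g₁ c < Q₀ + Q₁ := by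
  by_cases hc₀ : IsKCert f false c
  · have := h₁.2.2.2 c fun hc₁ => not_isKCert_true_and_false c ⟨hc₁, hc₀⟩
    have := h₀.le_goal c
    omega
  · have := h₀.2.2.2 c hc₀
    have := h₁.le_goal c
    omega

lemma KGoalFn.add_add_one_le_update (h₀ : KGoalFn f false g₀ Q₀) (h₁ : KGoalFn f true g₁ Q₁)
    {c : Fin n → Option Bool} {i : Fin n} (hc : c i = none) (hi : DependsOnVarWithin f c i)
    (ℓ : Bool) : g₀ c + g₁ c + 1 ≤ g₀ (update c i (some ℓ)) + g₁ (update c i (some ℓ)) := by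
  obtain ⟨x, hx, hxi⟩ := hi
  have hne : f (update x i (!ℓ)) ≠ f (update x i ℓ) := by
    cases ℓ
    · exact hxi
    · exact Ne.symm hxi
  cases hk : f (update x i ℓ)
  · have := h₀.succ_le_update hc hx ℓ hk (hk ▸ hne)
    have := h₁.1 c _ (extends_update hc ℓ)
    omega
  · have := h₁.succ_le_update hc hx ℓ hk (hk ▸ hne)
    have := h₀.1 c _ (extends_update hc ℓ)
    omega

theorem card_freeVars_add_lt (h₀ : KGoalFn f false g₀ Q₀) (h₁ : KGoalFn f true g₁ Q₁)
    (c : Fin n → Option Bool) (hdep : ∀ i ∈ freeVars c, DependsOnVarWithin f c i) :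
    #(freeVars c) + g₀ c + g₁ c < Q₀ + Q₁ := by
  induction hm : #(freeVars c) generalizing c with
  | zero => simpa using h₀.add_lt_add h₁ c
  | succ m ih =>
    obtain ⟨i, hi, ℓ, hdep'⟩ :=
      exists_update_forall_dependsOnVarWithin hdep (card_pos.1 (by omega))
    have hcard : #(freeVars (update c i (some ℓ))) = m := by
      rw [freeVars_update, card_erase_of_mem hi, hm, Nat.add_sub_cancel]
    have := ih _ hdep' hcard
    have := h₀.add_add_one_le_update h₁ (mem_freeVars.1 hi) (hdep i hi) ℓ
    omega

end Potential

section Existence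

variable (f : (Fin n → Bool) → Bool) (k : Bool)

/-- Fixing a free variable of `b` adds the points of `b` on the other side where `f ≠ k`; this
count is antitone in `b`, which is submodularity. -/
noncomputable def kGoalCount (b : Fin n → Option Bool) : ℕ :=
  #(univ.filter fun x => TExtends x b → f x = k)

variable {f k} {b : Fin n → Option Bool} {i : Fin n}

lemma kGoalCount_update (hb : b i = none) (ℓ : Bool) :
    kGoalCount f k (update b i (some ℓ))
      = kGoalCount f k b + #(univ.filter fun x => TExtends x b ∧ f x ≠ k ∧ x i ≠ ℓ) := by
  rw [kGoalCount, kGoalCount, ← card_union_of_disjoint, ← filter_or]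
  · congr 1
    ext x
    simp only [mem_filter, mem_univ, true_and, textends_update_iff hb]
    tauto
  · exact disjoint_filter.2 fun x _ h ⟨hx, hfx, _⟩ => hfx (h hx)

variable (f k)

lemma kGoalFn_kGoalCount : KGoalFn f k (kGoalCount f k) (Fintype.card (Fin n → Bool)) := by
  refine ⟨fun b b' h => ?_, fun b b' i ℓ h hb hb' => ?_, fun b hb => ?_, fun b hb => ?_⟩
  · exact card_le_card (monotone_filter_right _ fun x _ hx hx' => hx (hx'.mono h))
  · rw [kGoalCount_update hb, kGoalCount_update hb']
    have : #(univ.filter fun x => TExtends x b' ∧ f x ≠ k ∧ x i ≠ ℓ)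
        ≤ #(univ.filter fun x => TExtends x b ∧ f x ≠ k ∧ x i ≠ ℓ) :=
      card_le_card (monotone_filter_right _ fun x _ hx => ⟨hx.1.mono h, hx.2⟩)
    omega
  · exact card_filter_eq_iff.2 fun x _ => hb x
  · simp only [IsKCert, not_forall] at hb
    obtain ⟨x, hx, hfx⟩ := hb
    rw [kGoalCount, ← card_univ]
    exact card_lt_card (filter_ssubset.2 ⟨x, mem_univ x, fun h => hfx (h hx)⟩)

lemma exists_kGoalFn_gammaK : ∃ g, KGoalFn f k g (gammaK f k) :=
  Nat.sInf_mem (s := {Q | ∃ g, KGoalFn f k g Q}) ⟨_, _, kGoalFn_kGoalCount f k⟩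

end Existence

/-- if `f` depends on all `n` of its variables, then `Γ¹(f) + Γ⁰(f) ≥ n + 1`. -/
theorem stmt6 {n : ℕ} (f : (Fin n → Bool) → Bool) (hdep : ∀ i, DependsOnVar f i) :
    n + 1 ≤ gammaK f true + gammaK f false := by
  obtain ⟨g₀, h₀⟩ := exists_kGoalFn_gammaK f false
  obtain ⟨g₁, h₁⟩ := exists_kGoalFn_gammaK f true
  have hdep' : ∀ i ∈ freeVars (fun _ => none), DependsOnVarWithin f (fun _ => none) i :=
    fun i _ => (hdep i).imp fun x hx => ⟨fun _ _ h => (nomatch h), hx⟩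
  have := card_freeVars_add_lt h₀ h₁ _ hdep'
  simp only [freeVars, filter_true, card_univ, Fintype.card_fin] at this
  omega
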